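/- If a pseudo MV-algebra M has at least one lexicographic ideal and s is a state on M, then s vanishes on every lexicographic ideal of M (i.e., s(x) = 0 for every x in each lexicographic ideal). -/

import Mathlib

open Set

namespace PseudoMV

/-! ### Basic pseudo MV-algebra notions on the interval `Γ(K,v) = [0,v]`
of a (not necessarily abelian) lattice-ordered group `K`. -/

section Defs

variable {K : Type*} [Lattice K] [AddGroup K]

/-- `v` is a strong (order) unit of `K`. -/
def IsStrongUnit (v : K) : Prop := 0 ≤ v ∧ ∀ x : K, ∃ n : ℕ, x ≤ n • v

/-- The carrier of the pseudo MV-algebra `Γ(K,v)`. -/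
def carrier (v : K) : Set K := Set.Icc 0 v

/-- `x ⊕ y = (x + y) ⊓ v`. -/
def oplus (v x y : K) : K := (x + y) ⊓ v

/-- Left negation `x⁻ = v - x`. -/
def negL (v x : K) : K := v - x

/-- Right negation `x~ = -x + v`. -/
def negR (v x : K) : K := -x + v

/-- `x ⊙ y = (x - v + y) ⊔ 0`. -/
def odot (v x y : K) : K := (x - v + y) ⊔ 0

/-- The partial sum `x + y` is defined in `Γ(K,v)`, i.e. the group sum lies in `[0,v]`. -/
def sumDef (v x y : K) : Prop := 0 ≤ x + y ∧ x + y ≤ v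

/-- `n`-fold sum `n.x = x ⊕ ⋯ ⊕ x`. -/
def nOplus (v : K) : ℕ → K → K
  | 0, _ => 0
  | n + 1, x => oplus v (nOplus v n x) x

/-- `ord(x) < ∞`, i.e. some `n ≥ 1` satisfies `n.x = 1`. -/
def OrdFinite (v x : K) : Prop := ∃ n : ℕ, 1 ≤ n ∧ nOplus v n x = v

/-- The set of infinitesimal elements: all `n`-fold partial sums `nx` are defined. -/
def Infinit (v : K) : Set K := {x | x ∈ carrier v ∧ ∀ n : ℕ, n • x ≤ v}

/-- An ideal of `Γ(K,v)`. -/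
structure IsIdeal (v : K) (I : Set K) : Prop where
  subset : I ⊆ carrier v
  nonempty : I.Nonempty
  lower : ∀ a ∈ carrier v, ∀ b ∈ I, a ≤ b → a ∈ I
  oplus_mem : ∀ a ∈ I, ∀ b ∈ I, oplus v a b ∈ I

/-- A normal ideal: `x ⊕ I = I ⊕ x` for every `x`. -/
def IsNormalIdeal (v : K) (I : Set K) : Prop :=
  IsIdeal v I ∧ ∀ x ∈ carrier v, (fun a => oplus v x a) '' I = (fun a => oplus v a x) '' I

/-- A maximal ideal: proper and not properly contained in a proper ideal. -/
def IsMaximalIdeal (v : K) (I : Set K) : Prop :=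
  IsIdeal v I ∧ I ≠ carrier v ∧ ∀ J, IsIdeal v J → I ⊆ J → J ≠ carrier v → J = I

/-- A prime ideal. -/
def IsPrimeIdeal (v : K) (I : Set K) : Prop :=
  IsIdeal v I ∧ ∀ x ∈ carrier v, ∀ y ∈ carrier v, x ⊓ y ∈ I → x ∈ I ∨ y ∈ I

/-- The radical: intersection of all maximal ideals. -/
def Rad (v : K) : Set K := ⋂₀ {I | IsMaximalIdeal v I}

/-- The normal radical: intersection of all maximal ideals that are normal. -/
def RadN (v : K) : Set K := ⋂₀ {I | IsMaximalIdeal v I ∧ IsNormalIdeal v I}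

/-- Membership in the class `𝓜`: every maximal ideal is normal. -/
def MemClassM (v : K) : Prop := ∀ I, IsMaximalIdeal v I → IsNormalIdeal v I

/-- A symmetric pseudo MV-algebra: the two negations coincide. -/
def IsSymmetric (v : K) : Prop := ∀ x ∈ carrier v, negL v x = negR v x

/-- A local pseudo MV-algebra: a unique maximal ideal, which is moreover normal. -/
def IsLocal (v : K) : Prop :=
  ∃ I, IsMaximalIdeal v I ∧ IsNormalIdeal v I ∧ ∀ J, IsMaximalIdeal v J → J = I

/-- A state on `Γ(K,v)`. -/
structure IsState (v : K) (s : K → ℝ) : Prop where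
  maps_to : ∀ x ∈ carrier v, s x ∈ Set.Icc (0 : ℝ) 1
  map_unit : s v = 1
  additive : ∀ x ∈ carrier v, ∀ y ∈ carrier v, sumDef v x y → s (x + y) = s x + s y

/-- The kernel of a state. -/
def stateKer (v : K) (s : K → ℝ) : Set K := {x | x ∈ carrier v ∧ s x = 0}

/-- `x/I = y/I` in the quotient by the (normal) ideal `I`. -/
def quotEq (v : K) (I : Set K) (x y : K) : Prop :=
  oplus v (odot v x (negL v y)) (odot v y (negL v x)) ∈ I

/-- `x/I ≤ y/I` in the quotient by the (normal) ideal `I`. -/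
def quotLE (v : K) (I : Set K) (x y : K) : Prop := odot v x (negL v y) ∈ I

/-- A commutative ideal: a normal ideal with commutative quotient. -/
def IsCommutativeIdeal (v : K) (I : Set K) : Prop :=
  IsNormalIdeal v I ∧ ∀ x ∈ carrier v, ∀ y ∈ carrier v, quotEq v I (oplus v x y) (oplus v y x)

/-- A strict ideal: `x/I < y/I` implies `x < y`. -/
def IsStrictIdeal (v : K) (I : Set K) : Prop :=
  ∀ x ∈ carrier v, ∀ y ∈ carrier v, quotLE v I x y → ¬ quotLE v I y x → x < y

/-- A retractive (normal) ideal: the canonical projection `π_I : M → M/I` admits a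
homomorphic section `δ_I` with `π_I ∘ δ_I = id`.  We encode `δ_I` by the map
`d = δ_I ∘ π_I : M → M`, which must be constant on classes, a homomorphism with respect
to the quotient operations, and a section of `π_I`. -/
def IsRetractive (v : K) (I : Set K) : Prop :=
  ∃ d : K → K,
    (∀ x ∈ carrier v, d x ∈ carrier v) ∧
    (∀ x ∈ carrier v, ∀ y ∈ carrier v, quotEq v I x y → d x = d y) ∧
    (∀ x ∈ carrier v, ∀ y ∈ carrier v, d (oplus v x y) = oplus v (d x) (d y)) ∧
    (∀ x ∈ carrier v, d (negL v x) = negL v (d x)) ∧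
    (∀ x ∈ carrier v, d (negR v x) = negR v (d x)) ∧
    d 0 = 0 ∧ d v = v ∧
    (∀ x ∈ carrier v, quotEq v I (d x) x)

/-- A lexicographic ideal: a nontrivial proper commutative ideal that is strict,
retractive and prime. -/
def IsLexIdeal (v : K) (I : Set K) : Prop :=
  IsCommutativeIdeal v I ∧ I ≠ {0} ∧ I ≠ carrier v ∧
    IsStrictIdeal v I ∧ IsRetractive v I ∧ IsPrimeIdeal v I

/-- A subalgebra of `Γ(K,v)`. -/
def IsSubalgebra (v : K) (S : Set K) : Prop :=
  S ⊆ carrier v ∧ 0 ∈ S ∧ v ∈ S ∧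
    (∀ x ∈ S, ∀ y ∈ S, oplus v x y ∈ S) ∧
    (∀ x ∈ S, negL v x ∈ S) ∧ (∀ x ∈ S, negR v x ∈ S)

/-- The subalgebra generated by a subset. -/
def genSubalg (v : K) (A : Set K) : Set K := ⋂₀ {S | IsSubalgebra v S ∧ A ⊆ S}

end Defs

/-! ### `(H,u)`-decompositions -/

section Decomp

variable {H : Type*} [AddCommGroup H] [LinearOrder H] [IsOrderedAddMonoid H]
variable {K : Type*} [Lattice K] [AddGroup K]

/-- An `(H,u)`-decomposition of the pseudo MV-algebra `Γ(K,v)`. -/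
structure IsDecomposition (u : H) (v : K) (Md : H → Set K) : Prop where
  nonempty : ∀ t ∈ Set.Icc (0 : H) u, (Md t).Nonempty
  subset : ∀ t ∈ Set.Icc (0 : H) u, Md t ⊆ carrier v
  disjoint : ∀ s ∈ Set.Icc (0 : H) u, ∀ t ∈ Set.Icc (0 : H) u, s ≠ t → Md s ∩ Md t = ∅
  cover : ∀ x ∈ carrier v, ∃ t ∈ Set.Icc (0 : H) u, x ∈ Md t
  mono : ∀ s ∈ Set.Icc (0 : H) u, ∀ t ∈ Set.Icc (0 : H) u, s < t →
    ∀ a ∈ Md s, ∀ b ∈ Md t, a ≤ b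
  negL_eq : ∀ t ∈ Set.Icc (0 : H) u, negL v '' Md t = Md (u - t)
  negR_eq : ∀ t ∈ Set.Icc (0 : H) u, negR v '' Md t = Md (u - t)
  oplus_mem : ∀ s ∈ Set.Icc (0 : H) u, ∀ t ∈ Set.Icc (0 : H) u, ∀ x ∈ Md s, ∀ y ∈ Md t,
    oplus v x y ∈ Md (min (s + t) u)

/-- A strong cyclic family for an `(H,u)`-decomposition. -/
def StrongCyclicFamily (u : H) (v : K) (Md : H → Set K) (c : H → K) : Prop :=
  (∀ t ∈ Set.Icc (0 : H) u, c t ∈ Md t ∧ ∀ x : K, c t + x = x + c t) ∧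
  (∀ s ∈ Set.Icc (0 : H) u, ∀ t ∈ Set.Icc (0 : H) u, s + t ≤ u → c s + c t = c (s + t)) ∧
  c u = v

/-- A strong `(H,u)`-perfect pseudo MV-algebra. -/
def IsStrongPerfect (u : H) (v : K) : Prop :=
  ∃ Md c, IsDecomposition u v Md ∧ StrongCyclicFamily u v Md c

/-- A weak cyclic family for an `(H,u)`-decomposition. -/
def WeakCyclicFamily (u : H) (v : K) (Md : H → Set K) (c : H → K) : Prop :=
  c 0 = 0 ∧
  (∀ t ∈ Set.Icc (0 : H) u, c t ∈ Md t ∧ ∀ x : K, c t + x = x + c t) ∧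
  (∀ s ∈ Set.Icc (0 : H) u, ∀ t ∈ Set.Icc (0 : H) u, s + t ≤ u → c s + c t = c (s + t))

end Decomp

/-! ### Isomorphisms -/

section Iso

variable {K : Type*} [Lattice K] [AddGroup K]
variable {K' : Type*} [Lattice K'] [AddGroup K']

/-- An isomorphism of the pseudo MV-algebras `Γ(K,v)` and `Γ(K',v')` (encoded as a map
`K → K'` whose restriction to `[0,v]` is a bijection onto `[0,v']` preserving all
pseudo MV-operations). -/
structure IsPMVIso (v : K) (v' : K') (f : K → K') : Prop where
  maps_to : ∀ x ∈ carrier v, f x ∈ carrier v'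
  inj : ∀ x ∈ carrier v, ∀ y ∈ carrier v, f x = f y → x = y
  surj : ∀ y ∈ carrier v', ∃ x ∈ carrier v, f x = y
  map_zero : f 0 = 0
  map_unit : f v = v'
  map_oplus : ∀ x ∈ carrier v, ∀ y ∈ carrier v, f (oplus v x y) = oplus v' (f x) (f y)
  map_negL : ∀ x ∈ carrier v, f (negL v x) = negL v' (f x)
  map_negR : ∀ x ∈ carrier v, f (negR v x) = negR v' (f x)

/-- The pseudo MV-algebras `Γ(K,v)` and `Γ(K',v')` are isomorphic. -/
def PMVIsomorphic (v : K) (v' : K') : Prop := ∃ f, IsPMVIso v v' f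

end Iso

/-- An isomorphism of lattice-ordered groups: an order isomorphism that is additive. -/
def LGroupIsomorphic (G : Type*) (G' : Type*) [Lattice G] [AddGroup G] [Lattice G']
    [AddGroup G'] : Prop :=
  ∃ e : G ≃o G', ∀ x y : G, e (x + y) = e x + e y

/-! ### The lexicographic product of a linearly ordered group and a lattice-ordered group -/

/-- The lexicographic product `H ×ₗ G`. -/
@[ext]
structure LexProd (H : Type*) (G : Type*) where
  fst : H
  snd : G

namespace LexProd

variable {H : Type*} {G : Type*}

section Group

variable [AddGroup H] [AddGroup G]

instance : Add (LexProd H G) := ⟨fun p q => ⟨p.fst + q.fst, p.snd + q.snd⟩⟩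
instance : Zero (LexProd H G) := ⟨⟨0, 0⟩⟩
instance : Neg (LexProd H G) := ⟨fun p => ⟨-p.fst, -p.snd⟩⟩

instance : AddGroup (LexProd H G) :=
  AddGroup.ofLeftAxioms (fun a b c => LexProd.ext (add_assoc _ _ _) (add_assoc _ _ _))
    (fun a => LexProd.ext (zero_add _) (zero_add _))
    (fun a => LexProd.ext (neg_add_cancel _) (neg_add_cancel _))

@[simp] lemma add_fst (p q : LexProd H G) : (p + q).fst = p.fst + q.fst := rfl
@[simp] lemma add_snd (p q : LexProd H G) : (p + q).snd = p.snd + q.snd := rfl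
@[simp] lemma zero_fst : (0 : LexProd H G).fst = 0 := rfl
@[simp] lemma zero_snd : (0 : LexProd H G).snd = 0 := rfl

end Group

section Order

variable [LinearOrder H] [Lattice G]

instance : PartialOrder (LexProd H G) where
  le p q := p.fst < q.fst ∨ (p.fst = q.fst ∧ p.snd ≤ q.snd)
  le_refl p := Or.inr ⟨rfl, le_rfl⟩
  le_trans p q r := by
    rintro (h | ⟨h1, h2⟩) (h' | ⟨h1', h2'⟩)
    · exact Or.inl (h.trans h')
    · exact Or.inl (h1' ▸ h)
    · exact Or.inl (h1 ▸ h')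
    · exact Or.inr ⟨h1.trans h1', h2.trans h2'⟩
  le_antisymm p q := by
    rintro (h | ⟨h1, h2⟩) (h' | ⟨h1', h2'⟩)
    · exact absurd (h.trans h') (lt_irrefl _)
    · exact absurd h (h1' ▸ lt_irrefl _)
    · exact absurd h' (h1 ▸ lt_irrefl _)
    · exact LexProd.ext h1 (le_antisymm h2 h2')

lemma le_def {p q : LexProd H G} :
    p ≤ q ↔ p.fst < q.fst ∨ (p.fst = q.fst ∧ p.snd ≤ q.snd) := Iff.rfl

instance : Lattice (LexProd H G) :=
  { (inferInstance : PartialOrder (LexProd H G)) with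
    sup := fun p q =>
      if p.fst < q.fst then q else if q.fst < p.fst then p else ⟨p.fst, p.snd ⊔ q.snd⟩
    inf := fun p q =>
      if p.fst < q.fst then p else if q.fst < p.fst then q else ⟨p.fst, p.snd ⊓ q.snd⟩
    le_sup_left := fun p q => by
      try dsimp only
      split_ifs with h1 h2
      · exact Or.inl h1
      · exact le_rfl
      · exact Or.inr ⟨rfl, le_sup_left⟩
    le_sup_right := fun p q => by
      try dsimp only
      split_ifs with h1 h2
      · exact le_rfl
      · exact Or.inl h2
      · exact Or.inr ⟨le_antisymm (not_lt.mp h1) (not_lt.mp h2), le_sup_right⟩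
    sup_le := fun p q r hp hq => by
      try dsimp only
      split_ifs with h1 h2
      · exact hq
      · exact hp
      · have hfq : p.fst = q.fst := le_antisymm (not_lt.mp h2) (not_lt.mp h1)
        rcases hp with hp | ⟨hp1, hp2⟩
        · exact Or.inl hp
        · rcases hq with hq | ⟨hq1, hq2⟩
          · exact Or.inl (lt_of_eq_of_lt hfq hq)
          · exact Or.inr ⟨hp1, sup_le hp2 hq2⟩
    inf_le_left := fun p q => by
      try dsimp only
      split_ifs with h1 h2
      · exact le_rfl
      · exact Or.inl h2
      · exact Or.inr ⟨rfl, inf_le_left⟩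
    inf_le_right := fun p q => by
      try dsimp only
      split_ifs with h1 h2
      · exact Or.inl h1
      · exact le_rfl
      · exact Or.inr ⟨le_antisymm (not_lt.mp h2) (not_lt.mp h1), inf_le_right⟩
    le_inf := fun p q r hq hr => by
      try dsimp only
      split_ifs with h1 h2
      · exact hq
      · exact hr
      · have hfq : q.fst = r.fst := le_antisymm (not_lt.mp h2) (not_lt.mp h1)
        rcases hq with hq | ⟨hq1, hq2⟩
        · exact Or.inl hq
        · rcases hr with hr | ⟨hr1, hr2⟩
          · exact Or.inl (lt_of_lt_of_eq hr hfq.symm)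
          · exact Or.inr ⟨hq1, le_inf hq2 hr2⟩ }

end Order

section Covariant

variable [AddCommGroup H] [LinearOrder H] [IsOrderedAddMonoid H] [Lattice G] [AddGroup G]
  [CovariantClass G G (· + ·) (· ≤ ·)] [CovariantClass G G (Function.swap (· + ·)) (· ≤ ·)]

instance : CovariantClass (LexProd H G) (LexProd H G) (· + ·) (· ≤ ·) := by
  constructor
  rintro a x y (h | ⟨h1, h2⟩)
  · exact Or.inl (add_lt_add_right h a.fst)
  · exact Or.inr ⟨by simp [h1], add_le_add_right h2 a.snd⟩

instance : CovariantClass (LexProd H G) (LexProd H G) (Function.swap (· + ·)) (· ≤ ·) := by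
  constructor
  rintro a x y (h | ⟨h1, h2⟩)
  · exact Or.inl (add_lt_add_left h a.fst)
  · exact Or.inr ⟨by simp [h1], add_le_add_left h2 a.snd⟩

end Covariant

end LexProd

/-! ### Bundled lattice-ordered groups and linearly ordered unital abelian groups -/

universe u

/-- A bundled (not necessarily abelian) lattice-ordered group. -/
structure LGroupS : Type (u + 1) where
  carrier : Type u
  [lat : Lattice carrier]
  [grp : AddGroup carrier]
  [cov_left : CovariantClass carrier carrier (· + ·) (· ≤ ·)]
  [cov_right : CovariantClass carrier carrier (Function.swap (· + ·)) (· ≤ ·)]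

attribute [instance] LGroupS.lat LGroupS.grp LGroupS.cov_left LGroupS.cov_right

/-- A bundled linearly ordered abelian group with a strong unit. -/
structure LoGroupU : Type (u + 1) where
  carrier : Type u
  [str : AddCommGroup carrier]
  [strOrd : LinearOrder carrier]
  [strIsOrd : IsOrderedAddMonoid carrier]
  unit : carrier
  isStrongUnit : IsStrongUnit unit

attribute [instance] LoGroupU.str LoGroupU.strOrd LoGroupU.strIsOrd

/-- A lexicographic pseudo MV-algebra: one isomorphic to `Γ(H ×ₗ G, (u,0))` for some
linearly ordered abelian group `H` with strong unit `u` and some ℓ-group `G`. -/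
def IsLexicographicPMV.{u₁, u₂, u₃} {K : Type u₃} [Lattice K] [AddGroup K] (v : K) : Prop :=
  ∃ (Hs : LoGroupU.{u₁}) (Gs : LGroupS.{u₂}),
    PMVIsomorphic v (LexProd.mk Hs.unit (0 : Gs.carrier))

end PseudoMV

/-!
Let `I` be a proper strict ideal and `a, y ∈ I`. Then `a/I = 0/I` and `y⁻/I = 1/I ≠ 0/I`, since
`y⁻ ∈ I` would give `1 = y⁻ ⊕ y ∈ I`. Strictness turns `a/I < y⁻/I` into `a < y⁻ = v - y`, i.e.
`a + y ≤ v`. So `I` is closed under the group addition and every `x ∈ I` is infinitesimal: all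
multiples `n • x` stay in `[0,v]`. A state is additive on them, so `n * s x ≤ 1` for every `n`,
forcing `s x = 0`.
-/

namespace PseudoMV

variable {K : Type*} [Lattice K] [AddGroup K]

lemma odot_negL (v x y : K) : odot v x (negL v y) = (x - y) ⊔ 0 := by
  simp [odot, negL, sub_eq_add_neg, add_assoc]

lemma oplus_eq_add {v x y : K} (h : x + y ≤ v) : oplus v x y = x + y :=
  inf_eq_left.mpr h

namespace IsIdeal

variable {v : K} {I : Set K}

lemma zero_mem (hI : IsIdeal v I) : (0 : K) ∈ I := by
  obtain ⟨b, hb⟩ := hI.nonempty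
  have hb' := hI.subset hb
  exact hI.lower 0 ⟨le_rfl, hb'.1.trans hb'.2⟩ b hb hb'.1

lemma unit_not_mem (hI : IsIdeal v I) (hne : I ≠ carrier v) : v ∉ I := fun hv =>
  hne (hI.subset.antisymm fun a ha => hI.lower a ha v hv ha.2)

lemma negL_not_mem (hI : IsIdeal v I) (hne : I ≠ carrier v) {y : K} (hy : y ∈ I) :
    negL v y ∉ I := by
  intro hny
  have hsum : oplus v (negL v y) y = v := by simp [oplus, negL]
  exact hI.unit_not_mem hne (hsum ▸ hI.oplus_mem _ hny _ hy)

lemma mem_of_quotLE [AddRightMono K] (hI : IsIdeal v I) {a b : K} (hb : b ∈ carrier v)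
    (ha : a ∈ I) (hba : quotLE v I b a) : b ∈ I := by
  refine hI.lower b hb _ (hI.oplus_mem _ hba a ha) (le_inf ?_ hb.2)
  rw [odot_negL]
  calc b = b - a + a := (sub_add_cancel b a).symm
    _ ≤ (b - a) ⊔ 0 + a := add_le_add_left le_sup_left a

lemma quotLE_negL [AddLeftMono K] [AddRightMono K] (hI : IsIdeal v I) {a y : K} (ha : a ∈ I)
    (hy : y ≤ v) : quotLE v I a (negL v y) := by
  have ha' := hI.subset ha
  have hle : (a - negL v y) ⊔ 0 ≤ a := sup_le (sub_le_self a (sub_nonneg.mpr hy)) ha'.1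
  rw [quotLE, odot_negL]
  exact hI.lower _ ⟨le_sup_right, hle.trans ha'.2⟩ a ha hle

end IsIdeal

namespace IsStrictIdeal

variable [AddLeftMono K] [AddRightMono K] {v : K} {I : Set K}

lemma add_le (hs : IsStrictIdeal v I) (hI : IsIdeal v I) (hne : I ≠ carrier v) {a y : K}
    (ha : a ∈ I) (hy : y ∈ I) : a + y ≤ v := by
  have hy' := hI.subset hy
  have hny : negL v y ∈ carrier v := ⟨sub_nonneg.mpr hy'.2, sub_le_self v hy'.1⟩
  have hlt : a < negL v y := hs a (hI.subset ha) _ hny (hI.quotLE_negL ha hy'.2)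
    fun h => hI.negL_not_mem hne hy (hI.mem_of_quotLE hny ha h)
  calc a + y ≤ v - y + y := add_le_add_left hlt.le y
    _ = v := sub_add_cancel v y

lemma add_mem (hs : IsStrictIdeal v I) (hI : IsIdeal v I) (hne : I ≠ carrier v) {a y : K}
    (ha : a ∈ I) (hy : y ∈ I) : a + y ∈ I :=
  oplus_eq_add (hs.add_le hI hne ha hy) ▸ hI.oplus_mem a ha y hy

lemma subset_infinit (hs : IsStrictIdeal v I) (hI : IsIdeal v I) (hne : I ≠ carrier v) :
    I ⊆ Infinit v := by
  intro x hx
  have hnsmul : ∀ n : ℕ, n • x ∈ I := by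
    intro n
    induction n with
    | zero => simpa using hI.zero_mem
    | succ n ih => simpa [succ_nsmul] using hs.add_mem hI hne ih hx
  exact ⟨hI.subset hx, fun n => (hI.subset (hnsmul n)).2⟩

end IsStrictIdeal

lemma nsmul_mem_carrier [AddLeftMono K] {v x : K} (hx : x ∈ Infinit v) (n : ℕ) :
    n • x ∈ carrier v :=
  ⟨nsmul_nonneg hx.1.1 n, hx.2 n⟩

namespace IsState

variable {v : K} {s : K → ℝ}

lemma map_zero (hs : IsState v s) (hv : 0 ≤ v) : s 0 = 0 := by
  have h0 : (0 : K) ∈ carrier v := ⟨le_rfl, hv⟩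
  have := hs.additive 0 h0 0 h0 ⟨by simp, by simpa using hv⟩
  simp only [add_zero] at this
  linarith

variable [AddLeftMono K]

lemma map_nsmul (hs : IsState v s) {x : K} (hx : x ∈ Infinit v) (n : ℕ) :
    s (n • x) = n * s x := by
  induction n with
  | zero => simpa using hs.map_zero (hx.1.1.trans hx.1.2)
  | succ n ih =>
    have hsum : sumDef v (n • x) x := by
      have h := nsmul_mem_carrier hx (n + 1)
      rwa [succ_nsmul] at h
    rw [succ_nsmul, hs.additive _ (nsmul_mem_carrier hx n) x hx.1 hsum, ih]
    push_cast
    ring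

lemma eq_zero_of_mem_infinit (hs : IsState v s) {x : K} (hx : x ∈ Infinit v) : s x = 0 := by
  have hbound : ∀ n : ℕ, (n : ℝ) * s x ≤ 1 := fun n =>
    hs.map_nsmul hx n ▸ (hs.maps_to _ (nsmul_mem_carrier hx n)).2
  refine le_antisymm ?_ (hs.maps_to x hx.1).1
  by_contra! hpos
  obtain ⟨n, hn⟩ := exists_nat_gt (1 / s x)
  linarith [hbound n, (div_lt_iff₀ hpos).mp hn]

end IsState

end PseudoMV

open PseudoMV in
theorem stmt_13_general {K : Type*} [Lattice K] [AddGroup K]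
    [CovariantClass K K (· + ·) (· ≤ ·)] [CovariantClass K K (Function.swap (· + ·)) (· ≤ ·)]
    (v : K)
    (st : K → ℝ) (hst : IsState v st) :
    ∀ I : Set K, IsLexIdeal v I → ∀ x ∈ I, st x = 0 := by
  rintro I ⟨⟨⟨hI, -⟩, -⟩, -, hne, hstrict, -, -⟩ x hx
  exact hst.eq_zero_of_mem_infinit (hstrict.subset_infinit hI hne hx)

open PseudoMV in
/-- Corollary 7.3: if `M` has a lexicographic ideal, then every state vanishes on each
lexicographic ideal. -/
theorem stmt_13 {K : Type*} [Lattice K] [AddGroup K]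
    [CovariantClass K K (· + ·) (· ≤ ·)] [CovariantClass K K (Function.swap (· + ·)) (· ≤ ·)]
    (v : K) (hv : IsStrongUnit v) (hex : ∃ I : Set K, IsLexIdeal v I)
    (st : K → ℝ) (hst : IsState v st) :
    ∀ I : Set K, IsLexIdeal v I → ∀ x ∈ I, st x = 0 :=
  stmt_13_general v st hst
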